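/- Multilinearity of every valuation is not necessary for truthfulness at a fixed type profile. Concretely, let N = Fin 2 and T = Fin 2, with true types: v₀ τ p = 0 for all τ, p and p₀ τ = 0 for all τ; v₁ 0 p = (p 0)^2 * (p 1), v₁ 1 p = p 1, with p₁ 0 = 1 and p₁ 1 = 1/2 (note v₁ is not multilinear in PoS). Then for every efficient allocation choice π* and every family of pivot functions (h_i), no agent can gain by misreporting when the other reports truthfully: for each agent i and every report θ̂_i (an arbitrary valuation together with a PoS function with values in [0,1]), EU_i(θ_i, θ_i, θ_{-i}) ≥ EU_i(θ_i, θ̂_i, θ_{-i}). -/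

import Mathlib

/-- A function `f : (N → ℝ) → ℝ` is multilinear on `[0,1]^N`. -/
def MultilinearOn {N : Type*} [Fintype N] [DecidableEq N] (f : (N → ℝ) → ℝ) : Prop :=
  ∀ p : N → ℝ, (∀ j, 0 ≤ p j ∧ p j ≤ 1) → ∀ j,
    f p = p j * f (Function.update p j 1) + (1 - p j) * f (Function.update p j 0)

/-- A valuation `v : T → (N → ℝ) → ℝ` is multilinear in PoS. -/
def MultilinearInPoS {N T : Type*} [Fintype N] [DecidableEq N]
    (v : T → (N → ℝ) → ℝ) : Prop :=
  ∀ τ : T, MultilinearOn (v τ)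

/-- A type of an agent: a valuation together with a probability-of-success function
with values in `[0,1]`. -/
structure AgentType (N T : Type*) where
  v : T → (N → ℝ) → ℝ
  p : T → ℝ
  hp : ∀ τ, 0 ≤ p τ ∧ p τ ≤ 1

/-- The PoS profile `p^τ` of a type profile `θ` at allocation `τ`. -/
def PoSProfile {N T : Type*} (θ : N → AgentType N T) (τ : T) : N → ℝ :=
  fun j => (θ j).p τ

/-- The expected social welfare of allocation `τ` under type profile `θ`. -/
def SW {N T : Type*} [Fintype N] (θ : N → AgentType N T) (τ : T) : ℝ :=
  ∑ i, (θ i).v τ (PoSProfile θ τ)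

/-- An efficient allocation choice function. -/
def Efficient {N T : Type*} [Fintype N] (π : (N → AgentType N T) → T) : Prop :=
  ∀ θ τ, SW θ τ ≤ SW θ (π θ)

/-- A family of pivot functions `h_i` depends only on the types of agents other than `i`. -/
def PivotIndep {N T : Type*} (h : N → (N → AgentType N T) → ℝ) : Prop :=
  ∀ i θ θ', (∀ j, j ≠ i → θ j = θ' j) → h i θ = h i θ'

/-- Agent `i`'s expected utility in the PEV mechanism when her true type is `θ i`,
she reports `r`, and all other agents have true types `θ` and report truthfully. -/
noncomputable def EU {N T : Type*} [Fintype N] [DecidableEq N]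
    (π : (N → AgentType N T) → T) (h : N → (N → AgentType N T) → ℝ)
    (θ : N → AgentType N T) (i : N) (r : AgentType N T) : ℝ :=
  let τ := π (Function.update θ i r)
  let q := PoSProfile θ τ
  (θ i).p τ *
      ((θ i).v τ (Function.update q i 1) +
        ∑ j ∈ Finset.univ.erase i, (θ j).v τ (Function.update q i 1)) +
    (1 - (θ i).p τ) *
      ((θ i).v τ (Function.update q i 0) +
        ∑ j ∈ Finset.univ.erase i, (θ j).v τ (Function.update q i 0)) -
    h i θ

/-- Agent 0's true type: zero valuation and zero PoS everywhere. -/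
noncomputable def agent0 : AgentType (Fin 2) (Fin 2) :=
  ⟨fun _ _ => 0, fun _ => 0, by intro τ; norm_num⟩

/-- Agent 1's true type: `v₁ 0 p = (p 0)^2 * p 1`, `v₁ 1 p = p 1`; `p₁ 0 = 1`,
`p₁ 1 = 1/2`. Note `v₁` is not multilinear in PoS. -/
noncomputable def agent1 : AgentType (Fin 2) (Fin 2) :=
  ⟨fun τ p => if τ = 0 then (p 0) ^ 2 * p 1 else p 1,
   fun τ => if τ = 0 then 1 else 1 / 2,
   by intro τ; by_cases h : τ = 0 <;> simp [h] <;> norm_num⟩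

/-- The true type profile. -/
noncomputable def trueProfile : Fin 2 → AgentType (Fin 2) (Fin 2) :=
  fun i => if i = 0 then agent0 else agent1

/-!
In the PEV mechanism agent `i` receives the social welfare with her own success and failure
weighted by her true PoS (`pevWelfare`), minus a pivot that does not depend on her report; the
report enters only through the chosen allocation. So truthfulness at `θ` holds as soon as the
efficient allocation `π θ` maximizes `pevWelfare θ i`. At `trueProfile` the efficient allocation
is `1`, where `pevWelfare` is `1/2` for both agents, while it is `0` at allocation `0`: agent 0's
PoS is `0` there, which kills the non-multilinear term `(p 0)^2 * p 1`.
-/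

noncomputable def pevWelfare {N T : Type*} [Fintype N] [DecidableEq N]
    (θ : N → AgentType N T) (i : N) (τ : T) : ℝ :=
  (θ i).p τ * ∑ j, (θ j).v τ (Function.update (PoSProfile θ τ) i 1) +
    (1 - (θ i).p τ) * ∑ j, (θ j).v τ (Function.update (PoSProfile θ τ) i 0)

theorem EU_eq_pevWelfare_sub {N T : Type*} [Fintype N] [DecidableEq N]
    (π : (N → AgentType N T) → T) (h : N → (N → AgentType N T) → ℝ)
    (θ : N → AgentType N T) (i : N) (r : AgentType N T) :
    EU π h θ i r = pevWelfare θ i (π (Function.update θ i r)) - h i θ := by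
  unfold EU pevWelfare
  rw [← Finset.add_sum_erase _ _ (Finset.mem_univ i),
    ← Finset.add_sum_erase _ _ (Finset.mem_univ i)]

theorem EU_le_EU_self_of_pevWelfare_le {N T : Type*} [Fintype N] [DecidableEq N]
    (π : (N → AgentType N T) → T) (h : N → (N → AgentType N T) → ℝ)
    (θ : N → AgentType N T) (i : N) (r : AgentType N T)
    (hmax : ∀ τ, pevWelfare θ i τ ≤ pevWelfare θ i (π θ)) :
    EU π h θ i r ≤ EU π h θ i (θ i) := by
  rw [EU_eq_pevWelfare_sub, EU_eq_pevWelfare_sub, Function.update_eq_self]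
  exact sub_le_sub_right (hmax _) _

theorem Efficient.ne_of_SW_lt {N T : Type*} [Fintype N] {π : (N → AgentType N T) → T}
    (hπ : Efficient π) {θ : N → AgentType N T} {τ σ : T} (hlt : SW θ τ < SW θ σ) :
    π θ ≠ τ := by
  rintro rfl
  exact (hπ θ σ).not_gt hlt

theorem SW_trueProfile_zero : SW trueProfile 0 = 0 := by
  simp [SW, trueProfile, agent0, agent1, PoSProfile]

theorem SW_trueProfile_one : SW trueProfile 1 = 1 / 2 := by
  simp [SW, trueProfile, agent0, agent1, PoSProfile]

theorem Efficient.apply_trueProfile {π : (Fin 2 → AgentType (Fin 2) (Fin 2)) → Fin 2}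
    (hπ : Efficient π) : π trueProfile = 1 := by
  have hne : π trueProfile ≠ 0 :=
    hπ.ne_of_SW_lt (σ := 1) (by rw [SW_trueProfile_zero, SW_trueProfile_one]; norm_num)
  omega

theorem pevWelfare_trueProfile_zero (i : Fin 2) : pevWelfare trueProfile i 0 = 0 := by
  fin_cases i <;> simp [pevWelfare, trueProfile, agent0, agent1, PoSProfile, Function.update]

theorem pevWelfare_trueProfile_one (i : Fin 2) : pevWelfare trueProfile i 1 = 1 / 2 := by
  fin_cases i <;> norm_num [pevWelfare, trueProfile, agent0, agent1, PoSProfile, Function.update]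

theorem truthful_at_profile_without_multilinearity_general
    (π : (Fin 2 → AgentType (Fin 2) (Fin 2)) → Fin 2) (hπ : Efficient π)
    (h : Fin 2 → (Fin 2 → AgentType (Fin 2) (Fin 2)) → ℝ)
    (i : Fin 2) (r : AgentType (Fin 2) (Fin 2)) :
    EU π h trueProfile i r ≤ EU π h trueProfile i (trueProfile i) := by
  refine EU_le_EU_self_of_pevWelfare_le π h trueProfile i r ?_
  rw [hπ.apply_trueProfile, pevWelfare_trueProfile_one, Fin.forall_fin_two,
    pevWelfare_trueProfile_zero, pevWelfare_trueProfile_one]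
  norm_num

/-- multilinearity of every valuation is not necessary for
truthfulness at a fixed type profile: at `trueProfile` (where agent 1's valuation is
not multilinear in PoS), for every efficient allocation choice and every family of
pivot functions, no agent can gain in the PEV mechanism by misreporting when the
other reports truthfully. -/
theorem truthful_at_profile_without_multilinearity
    (π : (Fin 2 → AgentType (Fin 2) (Fin 2)) → Fin 2) (hπ : Efficient π)
    (h : Fin 2 → (Fin 2 → AgentType (Fin 2) (Fin 2)) → ℝ) (hh : PivotIndep h)
    (i : Fin 2) (r : AgentType (Fin 2) (Fin 2)) :
    EU π h trueProfile i r ≤ EU π h trueProfile i (trueProfile i) :=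
  truthful_at_profile_without_multilinearity_general π hπ h i r
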